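/- Let k be a field and q ∈ k a primitive N-th root of unity with N ≥ 2. Then for every integer α ≥ 0 and every integer β with 0 ≤ β < N, the Gaussian binomial coefficient satisfies (Nα + β choose β)_q = 1 in k. -/

import Mathlib

/-- The Gaussian binomial coefficient `(n choose i)_q`, defined by the q-Pascal recursion. -/
def gaussBinom {R : Type*} [CommRing R] (q : R) : ℕ → ℕ → R
  | _, 0 => 1
  | 0, _ + 1 => 0
  | n + 1, i + 1 => gaussBinom q n i + q ^ (i + 1) * gaussBinom q n (i + 1)

theorem gaussBinom_mul_prod {k : Type*} [CommRing k] (q : k) :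
    ∀ n i : ℕ, gaussBinom q n i * (∏ t ∈ Finset.range i, (1 - q ^ (t + 1)))
      = ∏ t ∈ Finset.range i, (1 - q ^ (n - t)) := by
  intro n
  induction n with
  | zero =>
    intro i
    cases i with
    | zero => simp [gaussBinom]
    | succ j =>
      rw [show gaussBinom q 0 (j + 1) = 0 from rfl, zero_mul]
      rw [eq_comm, Finset.prod_eq_zero (Finset.mem_range.2 (Nat.succ_pos j))]
      simp
  | succ n ih =>
    intro i
    cases i with
    | zero => simp [gaussBinom]
    | succ j =>
      rw [show gaussBinom q (n + 1) (j + 1)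
          = gaussBinom q n j + q ^ (j + 1) * gaussBinom q n (j + 1) from rfl]
      rw [Finset.prod_range_succ, Finset.prod_range_succ']
      have h1 : ∀ t, n + 1 - (t + 1) = n - t := fun t => Nat.succ_sub_succ n t
      simp only [h1, Nat.sub_zero]
      have e1 := ih j
      have e2 := ih (j + 1)
      rw [Finset.prod_range_succ] at e2
      have key : (gaussBinom q n j * ∏ t ∈ Finset.range j, (1 - q ^ (t + 1)))
            * (1 - q ^ (j + 1))
          + q ^ (j + 1) * (gaussBinom q n (j + 1)
            * ((∏ t ∈ Finset.range j, (1 - q ^ (t + 1))) * (1 - q ^ (j + 1))))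
          = (∏ t ∈ Finset.range j, (1 - q ^ (n - t))) * (1 - q ^ (n + 1)) := by
        rw [e1, e2, Finset.prod_range_succ]
        rcases le_or_gt j n with hjn | hjn
        · have : q ^ (j + 1) * q ^ (n - j) = q ^ (n + 1) := by
            rw [← pow_add]
            congr 1
            omega
          rw [← this]
          ring
        · have hz : (∏ t ∈ Finset.range j, (1 - q ^ (n - t))) = 0 := by
            apply Finset.prod_eq_zero (Finset.mem_range.2 hjn)
            simp
          rw [hz]
          ring
      calc (gaussBinom q n j + q ^ (j + 1) * gaussBinom q n (j + 1))
            * ((∏ t ∈ Finset.range j, (1 - q ^ (t + 1))) * (1 - q ^ (j + 1)))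
          = (gaussBinom q n j * ∏ t ∈ Finset.range j, (1 - q ^ (t + 1)))
            * (1 - q ^ (j + 1))
          + q ^ (j + 1) * (gaussBinom q n (j + 1)
            * ((∏ t ∈ Finset.range j, (1 - q ^ (t + 1))) * (1 - q ^ (j + 1)))) := by ring
        _ = (∏ t ∈ Finset.range j, (1 - q ^ (n - t))) * (1 - q ^ (n + 1)) := key

/-- If `q ∈ k` is a primitive `N`-th root of unity (`N ≥ 2`) in a field `k`, then for every
`α ≥ 0` and `0 ≤ β < N` one has `(Nα + β choose β)_q = 1`. -/
theorem gaussBinom_NαβChooseβ_eq_one {k : Type*} [Field k]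
    (q : k) (N : ℕ) (hN : 2 ≤ N) (hq : IsPrimitiveRoot q N)
    (α β : ℕ) (hβ : β < N) :
    gaussBinom q (N * α + β) β = 1 := by
  have key := gaussBinom_mul_prod q (N * α + β) β
  have hD : (∏ t ∈ Finset.range β, (1 - q ^ (t + 1))) ≠ 0 := by
    apply Finset.prod_ne_zero_iff.2
    intro t ht
    have h1 : q ^ (t + 1) ≠ 1 :=
      hq.pow_ne_one_of_pos_of_lt (Nat.succ_ne_zero t)
        (by have := Finset.mem_range.1 ht; omega)
    exact sub_ne_zero.2 (by simpa [eq_comm] using h1)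
  have hrhs : (∏ t ∈ Finset.range β, (1 - q ^ (N * α + β - t)))
      = ∏ t ∈ Finset.range β, (1 - q ^ (t + 1)) := by
    rw [← Finset.prod_range_reflect (fun t => 1 - q ^ (t + 1)) β]
    apply Finset.prod_congr rfl
    intro t ht
    have ht' := Finset.mem_range.1 ht
    have : N * α + β - t = N * α + (β - 1 - t + 1) := by omega
    rw [this, pow_add, pow_mul, hq.pow_eq_one, one_pow, one_mul]
  rw [hrhs] at key
  exact mul_right_cancel₀ hD (by rw [key, one_mul])
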